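/- The side-pairing of the 20-gon pairing side k with side k+3 when k ≡ 2 (mod 4) and side k with side k+9 when k ≡ 3 (mod 4) (indices mod 20) yields exactly 3 equivalence classes of vertices: the odd-indexed vertices {a₁, a₃, ..., a₁₉} form one class, {a₂, a₆, a₁₀, a₁₄, a₁₈} a second, and {a₄, a₈, a₁₂, a₁₆, a₂₀} a third. -/

import Mathlib

/-!
A generating identification only joins vertices of the same class: odd, `≡ 2 (mod 4)`, or
`≡ 0 (mod 4)`. Conversely, each class is a single cycle of identifications under `i ↦ i + s`,
where the step `s` is `10, 4, 2, 8` according as `i ≡ 1, 2, 3, 0 (mod 4)`: the cycles are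
`1 11 13 3 5 15 17 7 9 19`, `2 6 10 14 18` and `0 8 16 4 12`.
-/

/-- The basic vertex identifications of the 20-gon: vertices are labelled by
`ZMod 20` (vertex `i` is `aᵢ`, with `a₂₀ = a₀`), side `k` has endpoints
`a_k, a_{k+1}`, and pairing side `k` with side `k'` (orientation-reversingly)
identifies `a_k ∼ a_{k'+1}` and `a_{k+1} ∼ a_{k'}`.  Side `k` is paired with
`k + 3` for `k ∈ {2,6,10,14,18}` and with `k + 9` for `k ∈ {3,7,11,15,19}`. -/
def sidePairRel (i j : ZMod 20) : Prop :=
  ∃ k : ZMod 20,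
    ((k = 2 ∨ k = 6 ∨ k = 10 ∨ k = 14 ∨ k = 18) ∧
      ((i = k ∧ j = k + 4) ∨ (i = k + 1 ∧ j = k + 3))) ∨
    ((k = 3 ∨ k = 7 ∨ k = 11 ∨ k = 15 ∨ k = 19) ∧
      ((i = k ∧ j = k + 10) ∨ (i = k + 1 ∧ j = k + 9)))

open Relation Function

theorem Relation.eqvGen_iterate {α : Type*} {r : α → α → Prop} (next : α → α)
    (hnext : ∀ a, r a (next a) ∨ r (next a) a) (a : α) (n : ℕ) : EqvGen r a (next^[n] a) := by
  induction n with
  | zero => exact .refl a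
  | succ n ih =>
    rw [iterate_succ_apply']
    exact ih.trans _ _ _ <| (hnext _).elim (.rel _ _) fun h => .symm _ _ (.rel _ _ h)

theorem Relation.eqvGen_iff_of_iterate {α β : Type*} {r : α → α → Prop} (f : α → β)
    (hf : ∀ a b, r a b → f a = f b) (next : α → α) (hnext : ∀ a, r a (next a) ∨ r (next a) a)
    (horbit : ∀ a b, f a = f b → ∃ n, next^[n] a = b) (a b : α) :
    EqvGen r a b ↔ f a = f b := by
  refine ⟨fun h => ?_, fun hab => ?_⟩
  · induction h with
    | rel x y hxy => exact hf x y hxy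
    | refl => rfl
    | symm _ _ _ ih => exact ih.symm
    | trans _ _ _ _ _ ih₁ ih₂ => exact ih₁.trans ih₂
  · obtain ⟨n, rfl⟩ := horbit a b hab
    exact eqvGen_iterate next hnext a n

theorem Nat.card_quot_eq_of_eqvGen_iff {α β : Type*} {r : α → α → Prop} (f : α → β)
    (hf : ∀ a b, EqvGen r a b ↔ f a = f b) (hsurj : Surjective f) :
    Nat.card (Quot r) = Nat.card β := by
  refine Nat.card_eq_of_bijective (Quot.lift f fun a b h => (hf a b).1 (.rel a b h)) ⟨?_, ?_⟩
  · rintro ⟨a⟩ ⟨b⟩ h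
    exact Quot.eqvGen_sound ((hf a b).2 h)
  · intro y
    obtain ⟨a, rfl⟩ := hsurj y
    exact ⟨Quot.mk r a, rfl⟩

instance : DecidableRel sidePairRel := fun i j => by
  unfold sidePairRel; infer_instance

def vertexClass (i : ZMod 20) : Fin 3 :=
  if i.val % 2 = 1 then 1 else if i.val % 4 = 2 then 2 else 0

def vertexCycleStep (i : ZMod 20) : ZMod 20 :=
  match i.val % 4 with
  | 0 => i + 8
  | 1 => i + 10
  | 2 => i + 4
  | _ => i + 2

theorem vertexClass_eq_of_sidePairRel :
    ∀ i j, sidePairRel i j → vertexClass i = vertexClass j := by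
  decide

theorem sidePairRel_vertexCycleStep :
    ∀ i, sidePairRel i (vertexCycleStep i) ∨ sidePairRel (vertexCycleStep i) i := by
  decide

theorem exists_iterate_vertexCycleStep_of_vertexClass_eq :
    ∀ i j, vertexClass i = vertexClass j → ∃ n < 10, vertexCycleStep^[n] i = j := by
  decide

theorem vertexClass_eq_iff : ∀ i j : ZMod 20, vertexClass i = vertexClass j ↔
    ((i.val % 2 = 1 ∧ j.val % 2 = 1) ∨
     (i.val % 4 = 2 ∧ j.val % 4 = 2) ∨
     (i.val % 4 = 0 ∧ j.val % 4 = 0)) := by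
  decide

/-- The side pairings of the 20-gon yield exactly 3 equivalence classes of
vertices: the odd-indexed vertices form one class, the vertices with index
`≡ 2 (mod 4)` a second, and those with index `≡ 0 (mod 4)` a third. -/
theorem twentyGon_vertex_classes :
    (∀ i j : ZMod 20,
      Relation.EqvGen sidePairRel i j ↔
        ((i.val % 2 = 1 ∧ j.val % 2 = 1) ∨
         (i.val % 4 = 2 ∧ j.val % 4 = 2) ∨
         (i.val % 4 = 0 ∧ j.val % 4 = 0))) ∧
    Nat.card (Quot sidePairRel) = 3 := by
  have hclasses : ∀ i j, EqvGen sidePairRel i j ↔ vertexClass i = vertexClass j :=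
    eqvGen_iff_of_iterate vertexClass vertexClass_eq_of_sidePairRel vertexCycleStep
      sidePairRel_vertexCycleStep fun i j h =>
        (exists_iterate_vertexCycleStep_of_vertexClass_eq i j h).imp fun _ => And.right
  refine ⟨fun i j => (hclasses i j).trans (vertexClass_eq_iff i j), ?_⟩
  rw [Nat.card_quot_eq_of_eqvGen_iff vertexClass hclasses (by decide), Nat.card_fin]
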